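/- arXiv:2303.16367 — 2 statements merged into one kernel-verified Lean document; each statement's English description precedes it below -/
import Mathlib

section
/- Let X be a uniformly convex and uniformly smooth real Banach space with duality maps J : X → X* and J* : X* → X (so J* ∘ J = id_X). For r > 0, the generalized projection π_{B(r)} : X* → B(r), defined by minimizing the Lyapunov functional V(φ, y) = ‖φ‖² − 2⟨φ, y⟩ + ‖y‖² over y ∈ B(r), satisfies: π_{B(r)}(φ) = J*(φ) if ‖φ‖ ≤ r, and π_{B(r)}(φ) = (r/‖φ‖)·J*(φ) if ‖φ‖ > r. -/
/-! Since `φ y ≤ ‖φ‖ ‖y‖`, the Lyapunov functional satisfies `V(φ, y) ≥ (‖φ‖ - ‖y‖)²`, with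
equality when `y` is aligned with `φ`, i.e. `φ y = ‖φ‖ ‖y‖`. Both candidates are aligned
with `φ`, and their norms (`‖φ‖`, resp. `r`) are the points of `[0, r]` closest to `‖φ‖`. -/

open Metric

namespace ContinuousLinearMap

variable {E : Type*} [NormedAddCommGroup E] [NormedSpace ℝ E]

noncomputable def lyapunov (φ : E →L[ℝ] ℝ) (y : E) : ℝ := ‖φ‖ ^ 2 - 2 * φ y + ‖y‖ ^ 2

theorem sq_norm_sub_norm_le_lyapunov (φ : E →L[ℝ] ℝ) (y : E) :
    (‖φ‖ - ‖y‖) ^ 2 ≤ φ.lyapunov y := by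
  have := (le_abs_self (φ y)).trans (φ.le_opNorm y)
  rw [lyapunov]
  nlinarith

theorem lyapunov_eq_sq_of_apply_eq {φ : E →L[ℝ] ℝ} {x : E} (hx : φ x = ‖φ‖ * ‖x‖) :
    φ.lyapunov x = (‖φ‖ - ‖x‖) ^ 2 := by
  rw [lyapunov, hx]
  ring

theorem lyapunov_le_of_apply_eq {φ : E →L[ℝ] ℝ} {x y : E} (hx : φ x = ‖φ‖ * ‖x‖)
    (hxy : |‖φ‖ - ‖x‖| ≤ |‖φ‖ - ‖y‖|) : φ.lyapunov x ≤ φ.lyapunov y :=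
  calc φ.lyapunov x = (‖φ‖ - ‖x‖) ^ 2 := lyapunov_eq_sq_of_apply_eq hx
    _ ≤ (‖φ‖ - ‖y‖) ^ 2 := sq_le_sq.2 hxy
    _ ≤ φ.lyapunov y := sq_norm_sub_norm_le_lyapunov φ y

theorem apply_smul_eq_of_apply_eq {φ : E →L[ℝ] ℝ} {x : E} (hx : φ x = ‖φ‖ * ‖x‖)
    {c : ℝ} (hc : 0 ≤ c) : φ (c • x) = ‖φ‖ * ‖c • x‖ := by
  rw [map_smul, smul_eq_mul, hx, norm_smul, Real.norm_of_nonneg hc]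
  ring

end ContinuousLinearMap

open ContinuousLinearMap in
theorem stmt_17_general {X : Type*} [NormedAddCommGroup X] [NormedSpace ℝ X]
    (Js : (X →L[ℝ] ℝ) → X)
    (hJs : ∀ φ : X →L[ℝ] ℝ, φ (Js φ) = ‖φ‖ ^ 2 ∧ ‖Js φ‖ = ‖φ‖)
    (r : ℝ) (hr : 0 < r)
    (V : (X →L[ℝ] ℝ) → X → ℝ)
    (hV : ∀ φ y, V φ y = ‖φ‖ ^ 2 - 2 * φ y + ‖y‖ ^ 2) (φ : X →L[ℝ] ℝ) :
    (‖φ‖ ≤ r → Js φ ∈ closedBall (0 : X) r ∧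
      ∀ y ∈ closedBall (0 : X) r, V φ (Js φ) ≤ V φ y) ∧
    (r < ‖φ‖ → (r / ‖φ‖) • Js φ ∈ closedBall (0 : X) r ∧
      ∀ y ∈ closedBall (0 : X) r, V φ ((r / ‖φ‖) • Js φ) ≤ V φ y) := by
  obtain rfl : V = lyapunov := funext fun φ => funext (hV φ)
  obtain ⟨hφJ, hnJ⟩ := hJs φ
  have hJ : φ (Js φ) = ‖φ‖ * ‖Js φ‖ := by rw [hφJ, hnJ, sq]
  refine ⟨fun h => ⟨by rwa [mem_closedBall_zero_iff, hnJ], fun y _ => ?_⟩, fun h => ?_⟩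
  · refine lyapunov_le_of_apply_eq hJ ?_
    rw [hnJ, sub_self, abs_zero]
    exact abs_nonneg _
  have hc : 0 ≤ r / ‖φ‖ := div_nonneg hr.le (norm_nonneg φ)
  have hnorm : ‖(r / ‖φ‖) • Js φ‖ = r := by
    rw [norm_smul, Real.norm_of_nonneg hc, hnJ]
    field_simp [(hr.trans h).ne']
  refine ⟨by rw [mem_closedBall_zero_iff, hnorm], fun y hy => ?_⟩
  refine lyapunov_le_of_apply_eq (apply_smul_eq_of_apply_eq hJ hc) ?_
  rw [mem_closedBall_zero_iff] at hy
  rw [hnorm, abs_of_pos (sub_pos.2 h), abs_of_nonneg (by linarith)]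
  linarith

/-- The generalized projection `π_{B(r)}`, the minimizer of the Lyapunov functional
`V(φ, y) = ‖φ‖² − 2⟨φ, y⟩ + ‖y‖²` over the closed ball `B(r)`, is `J*φ` when
`‖φ‖ ≤ r` and `(r/‖φ‖) • J*φ` when `‖φ‖ > r` (stated as: the candidate lies in
`B(r)` and minimizes `V(φ, ·)` there). -/
theorem stmt_17 {X : Type*} [NormedAddCommGroup X] [NormedSpace ℝ X]
    [UniformConvexSpace X] [UniformConvexSpace (X →L[ℝ] ℝ)]
    (Js : (X →L[ℝ] ℝ) → X)
    (hJs : ∀ φ : X →L[ℝ] ℝ, φ (Js φ) = ‖φ‖ ^ 2 ∧ ‖Js φ‖ = ‖φ‖)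
    (r : ℝ) (hr : 0 < r)
    (V : (X →L[ℝ] ℝ) → X → ℝ)
    (hV : ∀ φ y, V φ y = ‖φ‖ ^ 2 - 2 * φ y + ‖y‖ ^ 2) (φ : X →L[ℝ] ℝ) :
    (‖φ‖ ≤ r → Js φ ∈ closedBall (0 : X) r ∧
      ∀ y ∈ closedBall (0 : X) r, V φ (Js φ) ≤ V φ y) ∧
    (r < ‖φ‖ → (r / ‖φ‖) • Js φ ∈ closedBall (0 : X) r ∧
      ∀ y ∈ closedBall (0 : X) r, V φ ((r / ‖φ‖) • Js φ) ≤ V φ y) :=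
  stmt_17_general Js hJs r hr V hV φ
end

section
/- Let X be a uniformly convex and uniformly smooth real Banach space with duality map J, r > 0, and B(r) the closed ball at 0. Then the generalized metric projection Π_{B(r)}(g) = π_{B(r)}(Jg) satisfies Π_{B(r)}(g) = g for ‖g‖ ≤ r and Π_{B(r)}(g) = (r/‖g‖)g for ‖g‖ > r; in particular Π_{B(r)} coincides with the metric projection P_{B(r)} on closed balls centered at the origin. -/
/-!
For `φ = J g` the functional `V(φ, y) = ‖φ‖² - 2 φ y + ‖y‖²` is bounded below by `(‖g‖ - ‖y‖)²`,
since `φ y ≤ ‖φ‖ ‖y‖` and `‖φ‖ = ‖g‖`. Along the ray through `g` the functional `J g` is norming,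
so this bound is attained at every nonnegative multiple of `g`. Over `B(r)` the lower bound is
minimized by the norm `min ‖g‖ r`, which is the norm of `g` or of `(r / ‖g‖) • g`; the same
reverse triangle inequality shows that the radial retraction is the nearest point of `B(r)`.
-/

open Metric

section

variable {X : Type*} [NormedAddCommGroup X] [NormedSpace ℝ X]

noncomputable def lyapunov (φ : X →L[ℝ] ℝ) (y : X) : ℝ := ‖φ‖ ^ 2 - 2 * φ y + ‖y‖ ^ 2

theorem sq_norm_sub_norm_le_lyapunov (φ : X →L[ℝ] ℝ) (y : X) :
    (‖φ‖ - ‖y‖) ^ 2 ≤ lyapunov φ y := by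
  have : φ y ≤ ‖φ‖ * ‖y‖ := (le_abs_self _).trans (φ.le_opNorm y)
  unfold lyapunov
  nlinarith

theorem lyapunov_eq_of_norming {φ : X →L[ℝ] ℝ} {y : X} (hy : φ y = ‖φ‖ * ‖y‖) :
    lyapunov φ y = (‖φ‖ - ‖y‖) ^ 2 := by
  rw [lyapunov, hy]
  ring

theorem norming_smul {φ : X →L[ℝ] ℝ} {g : X} (hg : φ g = ‖φ‖ * ‖g‖) {c : ℝ} (hc : 0 ≤ c) :
    φ (c • g) = ‖φ‖ * ‖c • g‖ := by
  rw [map_smul, smul_eq_mul, hg, norm_smul, Real.norm_of_nonneg hc]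
  ring

theorem lyapunov_le_of_norming {φ : X →L[ℝ] ℝ} {y₀ y : X} (hy₀ : φ y₀ = ‖φ‖ * ‖y₀‖)
    (h : |‖φ‖ - ‖y₀‖| ≤ |‖φ‖ - ‖y‖|) : lyapunov φ y₀ ≤ lyapunov φ y := by
  rw [lyapunov_eq_of_norming hy₀]
  exact (sq_le_sq.mpr h).trans (sq_norm_sub_norm_le_lyapunov φ y)

theorem norm_div_norm_smul {r : ℝ} (hr : 0 ≤ r) {g : X} (hg : g ≠ 0) :
    ‖(r / ‖g‖) • g‖ = r := by
  have : 0 < ‖g‖ := norm_pos_iff.mpr hg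
  rw [norm_smul, Real.norm_of_nonneg (by positivity), div_mul_cancel₀ _ this.ne']

theorem norm_sub_div_norm_smul {r : ℝ} {g : X} (hr : r ≤ ‖g‖) (hg : g ≠ 0) :
    ‖g - (r / ‖g‖) • g‖ = ‖g‖ - r := by
  have hpos : 0 < ‖g‖ := norm_pos_iff.mpr hg
  have hc : 0 ≤ 1 - r / ‖g‖ := sub_nonneg.mpr ((div_le_one hpos).mpr hr)
  have hsub : g - (r / ‖g‖) • g = (1 - r / ‖g‖) • g := by rw [sub_smul, one_smul]
  rw [hsub, norm_smul, Real.norm_of_nonneg hc, sub_mul, one_mul, div_mul_cancel₀ _ hpos.ne']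

theorem norm_sub_div_norm_smul_le {r : ℝ} {g f : X} (hr : r ≤ ‖g‖) (hg : g ≠ 0)
    (hf : f ∈ closedBall (0 : X) r) : ‖g - (r / ‖g‖) • g‖ ≤ ‖g - f‖ := by
  rw [norm_sub_div_norm_smul hr hg]
  have : ‖f‖ ≤ r := mem_closedBall_zero_iff.mp hf
  linarith [norm_sub_norm_le g f]

end

theorem stmt_19_general {X : Type*} [NormedAddCommGroup X] [NormedSpace ℝ X]
    (J : X → X →L[ℝ] ℝ)
    (hJ : ∀ y : X, J y y = ‖y‖ ^ 2 ∧ ‖J y‖ = ‖y‖)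
    (r : ℝ) (hr : 0 < r)
    (V : (X →L[ℝ] ℝ) → X → ℝ)
    (hV : ∀ φ y, V φ y = ‖φ‖ ^ 2 - 2 * φ y + ‖y‖ ^ 2) (g : X) :
    (‖g‖ ≤ r → ∀ y ∈ closedBall (0 : X) r, V (J g) g ≤ V (J g) y) ∧
    (r < ‖g‖ → (r / ‖g‖) • g ∈ closedBall (0 : X) r ∧
      (∀ y ∈ closedBall (0 : X) r, V (J g) ((r / ‖g‖) • g) ≤ V (J g) y) ∧
      (∀ f ∈ closedBall (0 : X) r, ‖g - (r / ‖g‖) • g‖ ≤ ‖g - f‖)) := by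
  obtain rfl : V = lyapunov := funext₂ hV
  obtain ⟨hJg, hJn⟩ := hJ g
  have hnorming : J g g = ‖J g‖ * ‖g‖ := by rw [hJg, hJn, sq]
  refine ⟨fun _ y _ ↦ lyapunov_le_of_norming hnorming
    (by rw [hJn, sub_self, abs_zero]; exact abs_nonneg _), fun hgr ↦ ?_⟩
  have hg : g ≠ 0 := norm_pos_iff.mp (hr.trans hgr)
  have hnorm : ‖(r / ‖g‖) • g‖ = r := norm_div_norm_smul hr.le hg
  refine ⟨mem_closedBall_zero_iff.mpr hnorm.le, fun y hy ↦ ?_,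
    fun f hf ↦ norm_sub_div_norm_smul_le hgr.le hg hf⟩
  have hy' : ‖y‖ ≤ r := mem_closedBall_zero_iff.mp hy
  refine lyapunov_le_of_norming (norming_smul hnorming (by positivity)) ?_
  rw [hJn, hnorm, abs_of_pos (sub_pos.mpr hgr), abs_of_nonneg (by linarith)]
  linarith

/-- The generalized metric projection `Π_{B(r)}(g) = π_{B(r)}(Jg)` equals `g` for
`‖g‖ ≤ r` and `(r/‖g‖) • g` for `‖g‖ > r`, stated via the minimization of the
Lyapunov functional `V(Jg, ·)` over `B(r)`; in the second case this point is also
the metric (nearest point) projection of `g`. -/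
theorem stmt_19 {X : Type*} [NormedAddCommGroup X] [NormedSpace ℝ X]
    [UniformConvexSpace X] [UniformConvexSpace (X →L[ℝ] ℝ)]
    (J : X → X →L[ℝ] ℝ)
    (hJ : ∀ y : X, J y y = ‖y‖ ^ 2 ∧ ‖J y‖ = ‖y‖)
    (r : ℝ) (hr : 0 < r)
    (V : (X →L[ℝ] ℝ) → X → ℝ)
    (hV : ∀ φ y, V φ y = ‖φ‖ ^ 2 - 2 * φ y + ‖y‖ ^ 2) (g : X) :
    (‖g‖ ≤ r → ∀ y ∈ closedBall (0 : X) r, V (J g) g ≤ V (J g) y) ∧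
    (r < ‖g‖ → (r / ‖g‖) • g ∈ closedBall (0 : X) r ∧
      (∀ y ∈ closedBall (0 : X) r, V (J g) ((r / ‖g‖) • g) ≤ V (J g) y) ∧
      (∀ f ∈ closedBall (0 : X) r, ‖g - (r / ‖g‖) • g‖ ≤ ‖g - f‖)) :=
  stmt_19_general J hJ r hr V hV g
end
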